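/- (Recursive expression for the MOSES error.) With the zero-padded MOSES iterates Ŷ_{k,r} ∈ ℝ^{n×Kb}, row spaces Q̂_{k,r} = span(Ŷ_{k,r}*), and Q̃_k = Q̂_{k−1,r} ⊕ I_k, it holds for every k ∈ [2:K] that Y_k − Ŷ_{k,r} = (Y_{k−1} − Ŷ_{k−1,r}) + Y_K(P_{Q̃_k} − P_{Q̂_{k,r}}). -/

import Mathlib

open MeasureTheory ProbabilityTheory Matrix

noncomputable def frobNorm {n m : ℕ} (A : Matrix (Fin n) (Fin m) ℝ) : ℝ :=
  Real.sqrt (∑ i, ∑ j, (A i j) ^ 2)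

noncomputable def frobInner {n m : ℕ} (A B : Matrix (Fin n) (Fin m) ℝ) : ℝ :=
  ∑ i, ∑ j, A i j * B i j

noncomputable def specNorm {n m : ℕ} (A : Matrix (Fin n) (Fin m) ℝ) : ℝ :=
  ‖LinearMap.toContinuousLinearMap (Matrix.toEuclideanLin A)‖

noncomputable def singularValue {n m : ℕ} (A : Matrix (Fin n) (Fin m) ℝ) (i : Fin n) : ℝ :=
  Real.sqrt ((Matrix.isHermitian_mul_conjTranspose_self A).eigenvalues
    (Tuple.sort (Matrix.isHermitian_mul_conjTranspose_self A).eigenvalues i.rev))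

noncomputable def residualSq {n m : ℕ} (r : ℕ) (A : Matrix (Fin n) (Fin m) ℝ) : ℝ :=
  ∑ i : Fin n, if r ≤ (i : ℕ) then (singularValue A i) ^ 2 else 0

def IsTruncSVD {n m : ℕ} (r : ℕ) (A Ar : Matrix (Fin n) (Fin m) ℝ) : Prop :=
  Ar.rank ≤ r ∧ ∀ B : Matrix (Fin n) (Fin m) ℝ, B.rank ≤ r →
    frobNorm (A - Ar) ≤ frobNorm (A - B)

noncomputable def colSpan {n m : ℕ} (A : Matrix (Fin n) (Fin m) ℝ) :
    Submodule ℝ (EuclideanSpace ℝ (Fin n)) :=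
  Submodule.span ℝ (Set.range fun j : Fin m =>
    ((WithLp.equiv 2 (Fin n → ℝ)).symm fun i => A i j))

noncomputable def rowSpan {n m : ℕ} (A : Matrix (Fin n) (Fin m) ℝ) :
    Submodule ℝ (EuclideanSpace ℝ (Fin m)) := colSpan Aᵀ

noncomputable def projMatrix {n : ℕ} (U : Submodule ℝ (EuclideanSpace ℝ (Fin n))) :
    Matrix (Fin n) (Fin n) ℝ :=
  Matrix.of fun i j =>
    (U.orthogonalProjectionOnto (EuclideanSpace.single j 1) : EuclideanSpace ℝ (Fin n)) i

noncomputable def coordSubspace {M : ℕ} (s t : ℕ) : Submodule ℝ (EuclideanSpace ℝ (Fin M)) :=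
  Submodule.span ℝ ((fun j : Fin M => (EuclideanSpace.single j (1:ℝ))) ''
    {j : Fin M | s ≤ (j : ℕ) ∧ (j : ℕ) < t})

def padTrunc {n M : ℕ} (A : Matrix (Fin n) (Fin M) ℝ) (m : ℕ) :
    Matrix (Fin n) (Fin M) ℝ :=
  Matrix.of fun i j => if (j : ℕ) < m then A i j else 0

def IsMOSES {n M : ℕ} (r b K : ℕ) (Y : Matrix (Fin n) (Fin M) ℝ)
    (Yhat : ℕ → Matrix (Fin n) (Fin M) ℝ) : Prop :=
  Yhat 0 = 0 ∧ ∀ k, 1 ≤ k → k ≤ K →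
    IsTruncSVD r (Yhat (k - 1) + (padTrunc Y (k * b) - padTrunc Y ((k - 1) * b))) (Yhat k)

noncomputable def stdGaussianSeq (n m : ℕ) : Measure (Fin n → Fin m → ℝ) :=
  Measure.pi fun _ => Measure.pi fun _ => gaussianReal 0 1

noncomputable def gaussianOfRoot {n : ℕ} (A : Matrix (Fin n) (Fin n) ℝ) :
    Measure (EuclideanSpace ℝ (Fin n)) :=
  (Measure.pi fun _ : Fin n => gaussianReal 0 1).map
    (fun g => (WithLp.equiv 2 (Fin n → ℝ)).symm (A.mulVec g))

/-!
Write `A_k = Ŷ_{k-1,r} + (Y_k - Y_{k-1})` for the matrix whose truncated SVD is `Ŷ_{k,r}`.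
Minimality in Frobenius norm (a Pythagoras argument, row by row) gives `Ŷ_{k,r} = A_k P_{Q̂_{k,r}}`
and forces `Q̂_{k,r}` into every subspace containing the rows of `A_k`, in particular into `Q̃_k`.
By induction, the rows of `Ŷ_{k,r}` live in the first `kb` coordinates and the rows of
`Y_k - Ŷ_{k,r}` are orthogonal to `Q̂_{k,r}`. Hence in `Y = (Y - Y_k) + (Y_{k-1} - Ŷ_{k-1,r}) + A_k`
the first two summands have rows orthogonal to `Q̃_k` while `A_k` has rows in `Q̃_k`, so
`Y (P_{Q̃_k} - P_{Q̂_{k,r}}) = A_k - Ŷ_{k,r}`, which is the recursion.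
-/

open Submodule

section RowSpan

variable {n m : ℕ}

lemma rowSpan_eq_span_row (A : Matrix (Fin n) (Fin m) ℝ) :
    rowSpan A = span ℝ (Set.range fun i => WithLp.toLp 2 (A i)) := rfl

lemma rowSpan_le_iff {A : Matrix (Fin n) (Fin m) ℝ}
    {U : Submodule ℝ (EuclideanSpace ℝ (Fin m))} :
    rowSpan A ≤ U ↔ ∀ i, WithLp.toLp 2 (A i) ∈ U := by
  rw [rowSpan_eq_span_row, span_le, Set.range_subset_iff]
  rfl

lemma toLp_row_mem_rowSpan (A : Matrix (Fin n) (Fin m) ℝ) (i : Fin n) :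
    WithLp.toLp 2 (A i) ∈ rowSpan A :=
  subset_span ⟨i, rfl⟩

lemma rowSpan_zero : rowSpan (0 : Matrix (Fin n) (Fin m) ℝ) = ⊥ :=
  eq_bot_iff.2 <| rowSpan_le_iff.2 fun _ => zero_mem _

lemma rowSpan_add_le (A B : Matrix (Fin n) (Fin m) ℝ) :
    rowSpan (A + B) ≤ rowSpan A ⊔ rowSpan B :=
  rowSpan_le_iff.2 fun i => add_mem_sup (toLp_row_mem_rowSpan A i) (toLp_row_mem_rowSpan B i)

lemma rowSpan_sub_le (A B : Matrix (Fin n) (Fin m) ℝ) :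
    rowSpan (A - B) ≤ rowSpan A ⊔ rowSpan B :=
  rowSpan_le_iff.2 fun i =>
    sub_mem (mem_sup_left (toLp_row_mem_rowSpan A i)) (mem_sup_right (toLp_row_mem_rowSpan B i))

lemma rank_eq_finrank_rowSpan (A : Matrix (Fin n) (Fin m) ℝ) :
    A.rank = Module.finrank ℝ (rowSpan A) := by
  let e := (WithLp.linearEquiv 2 ℝ (Fin m → ℝ)).symm
  rw [Matrix.rank_eq_finrank_span_row, ← e.finrank_map_eq, map_span, ← Set.range_comp]
  rfl

lemma ext_toLp_row {A B : Matrix (Fin n) (Fin m) ℝ}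
    (h : ∀ i, WithLp.toLp 2 (A i) = WithLp.toLp 2 (B i)) : A = B :=
  funext fun i => WithLp.toLp_injective 2 (h i)

variable (U : Submodule ℝ (EuclideanSpace ℝ (Fin m)))

lemma toLp_row_mul_projMatrix (A : Matrix (Fin n) (Fin m) ℝ) (i : Fin n) :
    WithLp.toLp 2 ((A * projMatrix U) i) = U.starProjection (WithLp.toLp 2 (A i)) := by
  ext j
  calc (A * projMatrix U) i j
      = inner ℝ (U.starProjection (EuclideanSpace.single j 1)) (WithLp.toLp 2 (A i)) := by
        simp [Matrix.mul_apply, projMatrix, PiLp.inner_apply]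
    _ = U.starProjection (WithLp.toLp 2 (A i)) j := by
        rw [inner_starProjection_left_eq_right, EuclideanSpace.inner_single_left]
        simp

lemma rowSpan_mul_projMatrix_le (A : Matrix (Fin n) (Fin m) ℝ) :
    rowSpan (A * projMatrix U) ≤ U :=
  rowSpan_le_iff.2 fun i => by
    rw [toLp_row_mul_projMatrix]
    exact starProjection_apply_mem U _

lemma rowSpan_sub_mul_projMatrix_le (A : Matrix (Fin n) (Fin m) ℝ) :
    rowSpan (A - A * projMatrix U) ≤ Uᗮ :=
  rowSpan_le_iff.2 fun i => by
    have h := sub_starProjection_mem_orthogonal (K := U) (WithLp.toLp 2 (A i))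
    rwa [← toLp_row_mul_projMatrix] at h

lemma mul_projMatrix_eq_self_iff {A : Matrix (Fin n) (Fin m) ℝ} :
    A * projMatrix U = A ↔ rowSpan A ≤ U := by
  refine ⟨fun h => h ▸ rowSpan_mul_projMatrix_le U A, fun h => ext_toLp_row fun i => ?_⟩
  rw [toLp_row_mul_projMatrix, starProjection_eq_self_iff]
  exact rowSpan_le_iff.1 h i

lemma mul_projMatrix_eq_zero {A : Matrix (Fin n) (Fin m) ℝ} (h : rowSpan A ≤ Uᗮ) :
    A * projMatrix U = 0 :=
  ext_toLp_row fun i =>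
    (toLp_row_mul_projMatrix U A i).trans
      ((starProjection_apply_eq_zero_iff U).2 (rowSpan_le_iff.1 h i))

lemma mul_projMatrix_sub_projMatrix {E A : Matrix (Fin n) (Fin m) ℝ}
    {V W : Submodule ℝ (EuclideanSpace ℝ (Fin m))} (hE : rowSpan E ≤ Vᗮ)
    (hA : rowSpan A ≤ V) (hWV : W ≤ V) :
    (E + A) * (projMatrix V - projMatrix W) = A - A * projMatrix W := by
  rw [Matrix.mul_sub, Matrix.add_mul, Matrix.add_mul, mul_projMatrix_eq_zero V hE,
    mul_projMatrix_eq_zero W (hE.trans (orthogonal_le hWV)), (mul_projMatrix_eq_self_iff V).2 hA]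
  abel

end RowSpan

section Frobenius

variable {n m : ℕ}

lemma frobNorm_sq (A : Matrix (Fin n) (Fin m) ℝ) :
    frobNorm A ^ 2 = ∑ i, ‖WithLp.toLp 2 (A i)‖ ^ 2 := by
  rw [frobNorm, Real.sq_sqrt (by positivity)]
  simp [EuclideanSpace.norm_sq_eq]

lemma frobNorm_sub_sq_of_isOrtho {X Z : Matrix (Fin n) (Fin m) ℝ} (h : rowSpan X ⟂ rowSpan Z) :
    frobNorm (X - Z) ^ 2 = frobNorm X ^ 2 + frobNorm Z ^ 2 := by
  rw [frobNorm_sq, frobNorm_sq, frobNorm_sq, ← Finset.sum_add_distrib]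
  refine Finset.sum_congr rfl fun i _ => ?_
  simp only [sq]
  exact norm_sub_sq_eq_norm_sq_add_norm_sq_real
    (h.inner_eq (toLp_row_mem_rowSpan X i) (toLp_row_mem_rowSpan Z i))

lemma eq_zero_of_frobNorm_sub_le {X Z : Matrix (Fin n) (Fin m) ℝ} (h : rowSpan X ⟂ rowSpan Z)
    (hle : frobNorm (X - Z) ≤ frobNorm X) : Z = 0 := by
  have hsq : frobNorm (X - Z) ^ 2 ≤ frobNorm X ^ 2 :=
    pow_le_pow_left₀ (Real.sqrt_nonneg _) hle 2
  rw [frobNorm_sub_sq_of_isOrtho h] at hsq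
  have hZ : ∑ i, ‖WithLp.toLp 2 (Z i)‖ ^ 2 = 0 := by
    rw [← frobNorm_sq]
    nlinarith [sq_nonneg (frobNorm Z)]
  rw [Finset.sum_eq_zero_iff_of_nonneg fun _ _ => sq_nonneg _] at hZ
  have hrow : ∀ i, Z i = 0 := fun i => by simpa using hZ i (Finset.mem_univ i)
  exact funext hrow

variable {r : ℕ} {A Ar : Matrix (Fin n) (Fin m) ℝ}

theorem IsTruncSVD.mul_projMatrix_rowSpan (h : IsTruncSVD r A Ar) :
    A * projMatrix (rowSpan Ar) = Ar := by
  set U := rowSpan Ar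
  set B := A * projMatrix U
  have hB : rowSpan B ≤ U := rowSpan_mul_projMatrix_le U A
  have hrank : B.rank ≤ r := by
    rw [rank_eq_finrank_rowSpan]
    exact (finrank_mono hB).trans ((rank_eq_finrank_rowSpan Ar).symm.trans_le h.1)
  have horth : rowSpan (A - B) ⟂ rowSpan (Ar - B) := isOrtho_iff_le.2 <|
    (rowSpan_sub_mul_projMatrix_le U A).trans <| orthogonal_le <|
      (rowSpan_sub_le Ar B).trans (sup_le le_rfl hB)
  have hle : frobNorm ((A - B) - (Ar - B)) ≤ frobNorm (A - B) := by
    simpa only [sub_sub_sub_cancel_right] using h.2 B hrank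
  exact (sub_eq_zero.1 (eq_zero_of_frobNorm_sub_le horth hle)).symm

theorem IsTruncSVD.rowSpan_le (h : IsTruncSVD r A Ar)
    {S : Submodule ℝ (EuclideanSpace ℝ (Fin m))} (hA : rowSpan A ≤ S) : rowSpan Ar ≤ S := by
  set B := Ar * projMatrix S
  have hrank : B.rank ≤ r := (Matrix.rank_mul_le_left Ar _).trans h.1
  have horth : rowSpan (A - B) ⟂ rowSpan (Ar - B) := isOrtho_iff_le.2 <|
    (rowSpan_sub_le A B).trans <| (sup_le hA (rowSpan_mul_projMatrix_le S Ar)).trans <|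
      (le_orthogonal_orthogonal S).trans (orthogonal_le (rowSpan_sub_mul_projMatrix_le S Ar))
  have hle : frobNorm ((A - B) - (Ar - B)) ≤ frobNorm (A - B) := by
    simpa only [sub_sub_sub_cancel_right] using h.2 B hrank
  exact (mul_projMatrix_eq_self_iff S).1 (sub_eq_zero.1 (eq_zero_of_frobNorm_sub_le horth hle)).symm

end Frobenius

section Coordinates

variable {n M : ℕ}

lemma mem_coordSubspace {s t : ℕ} {x : EuclideanSpace ℝ (Fin M)}
    (h : ∀ j : Fin M, x j ≠ 0 → s ≤ j ∧ (j : ℕ) < t) : x ∈ coordSubspace s t := by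
  rw [← (EuclideanSpace.basisFun (Fin M) ℝ).sum_repr x]
  refine sum_mem fun j _ => ?_
  by_cases hj : x j = 0
  · simp [hj]
  · exact smul_mem _ _ (subset_span ⟨j, h j hj, by simp⟩)

lemma rowSpan_le_coordSubspace {s t : ℕ} {A : Matrix (Fin n) (Fin M) ℝ}
    (h : ∀ i j, A i j ≠ 0 → s ≤ (j : ℕ) ∧ (j : ℕ) < t) :
    rowSpan A ≤ coordSubspace s t :=
  rowSpan_le_iff.2 fun i => mem_coordSubspace (h i)

lemma coordSubspace_mono {s s' t t' : ℕ} (hs : s' ≤ s) (ht : t ≤ t') :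
    (coordSubspace s t : Submodule ℝ (EuclideanSpace ℝ (Fin M))) ≤ coordSubspace s' t' :=
  span_mono <| Set.image_mono fun _ hj => ⟨hs.trans hj.1, hj.2.trans_le ht⟩

lemma coordSubspace_isOrtho {s t s' t' : ℕ} (h : t ≤ s') :
    (coordSubspace s t : Submodule ℝ (EuclideanSpace ℝ (Fin M))) ⟂ coordSubspace s' t' := by
  refine isOrtho_span.2 ?_
  rintro _ ⟨i, hi, rfl⟩ _ ⟨j, hj, rfl⟩
  have hij : i ≠ j := by
    rintro rfl
    exact absurd (hi.2.trans_le h) (not_lt.2 hj.1)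
  simp [EuclideanSpace.inner_single_left, hij.symm]

variable (Y : Matrix (Fin n) (Fin M) ℝ)

lemma padTrunc_zero : padTrunc Y 0 = 0 := by
  ext i j
  simp [padTrunc]

lemma rowSpan_padTrunc_le (t : ℕ) : rowSpan (padTrunc Y t) ≤ coordSubspace 0 t :=
  rowSpan_le_coordSubspace fun i j h => by
    simp only [padTrunc, Matrix.of_apply] at h
    split_ifs at h with hj
    exacts [⟨Nat.zero_le _, hj⟩, absurd rfl h]

lemma rowSpan_padTrunc_sub_le {s t : ℕ} (hst : s ≤ t) :
    rowSpan (padTrunc Y t - padTrunc Y s) ≤ coordSubspace s t :=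
  rowSpan_le_coordSubspace fun i j h => by
    simp only [padTrunc, Matrix.sub_apply, Matrix.of_apply] at h
    split_ifs at h <;> first | omega | simp at h

lemma rowSpan_sub_padTrunc_le (t : ℕ) : rowSpan (Y - padTrunc Y t) ≤ coordSubspace t M :=
  rowSpan_le_coordSubspace fun i j h => by
    simp only [padTrunc, Matrix.sub_apply, Matrix.of_apply] at h
    split_ifs at h <;> first | omega | simp at h

end Coordinates

section Step

variable {n M : ℕ}

variable {r s t : ℕ} {Y Yh Yh' : Matrix (Fin n) (Fin M) ℝ}

lemma sup_coordSubspace_le (hst : s ≤ t) (hsupp : rowSpan Yh ≤ coordSubspace 0 s) :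
    rowSpan Yh ⊔ coordSubspace s t ≤ coordSubspace 0 t :=
  sup_le (hsupp.trans (coordSubspace_mono le_rfl hst)) (coordSubspace_mono (Nat.zero_le s) le_rfl)

lemma rowSpan_padTrunc_sub_le_orthogonal (hsupp : rowSpan Yh ≤ coordSubspace 0 s)
    (horth : rowSpan (padTrunc Y s - Yh) ≤ (rowSpan Yh)ᗮ) :
    rowSpan (padTrunc Y s - Yh) ≤ (rowSpan Yh ⊔ coordSubspace s t)ᗮ := by
  have hcoord : rowSpan (padTrunc Y s - Yh) ≤ coordSubspace 0 s :=
    (rowSpan_sub_le _ _).trans (sup_le (rowSpan_padTrunc_le Y s) hsupp)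
  rw [← inf_orthogonal]
  exact le_inf horth (isOrtho_iff_le.1 ((coordSubspace_isOrtho le_rfl).mono_left hcoord))

lemma rowSpan_add_padTrunc_sub_le (hst : s ≤ t) :
    rowSpan (Yh + (padTrunc Y t - padTrunc Y s)) ≤ rowSpan Yh ⊔ coordSubspace s t :=
  (rowSpan_add_le _ _).trans (sup_le_sup_left (rowSpan_padTrunc_sub_le Y hst) _)

theorem invariant_step (hst : s ≤ t) (hsupp : rowSpan Yh ≤ coordSubspace 0 s)
    (horth : rowSpan (padTrunc Y s - Yh) ≤ (rowSpan Yh)ᗮ)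
    (hsvd : IsTruncSVD r (Yh + (padTrunc Y t - padTrunc Y s)) Yh') :
    rowSpan Yh' ≤ coordSubspace 0 t ∧ rowSpan (padTrunc Y t - Yh') ≤ (rowSpan Yh')ᗮ := by
  have hA := rowSpan_add_padTrunc_sub_le (Y := Y) (Yh := Yh) hst
  refine ⟨hsvd.rowSpan_le (hA.trans (sup_coordSubspace_le hst hsupp)), ?_⟩
  set A := Yh + (padTrunc Y t - padTrunc Y s) with hAdef
  have hsplit : padTrunc Y t - Yh' = (padTrunc Y s - Yh) + (A - A * projMatrix (rowSpan Yh')) := by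
    rw [hsvd.mul_projMatrix_rowSpan, hAdef]
    abel
  rw [hsplit]
  refine (rowSpan_add_le _ _).trans (sup_le ?_ (rowSpan_sub_mul_projMatrix_le _ A))
  exact (rowSpan_padTrunc_sub_le_orthogonal hsupp horth).trans
    (orthogonal_le (hsvd.rowSpan_le hA))

theorem error_step (hst : s ≤ t) (hsupp : rowSpan Yh ≤ coordSubspace 0 s)
    (horth : rowSpan (padTrunc Y s - Yh) ≤ (rowSpan Yh)ᗮ)
    (hsvd : IsTruncSVD r (Yh + (padTrunc Y t - padTrunc Y s)) Yh') :
    Y * (projMatrix (rowSpan Yh ⊔ coordSubspace s t) - projMatrix (rowSpan Yh')) =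
      (padTrunc Y t - Yh') - (padTrunc Y s - Yh) := by
  set A := Yh + (padTrunc Y t - padTrunc Y s) with hAdef
  have hA : rowSpan A ≤ rowSpan Yh ⊔ coordSubspace s t := rowSpan_add_padTrunc_sub_le hst
  have hE : rowSpan ((Y - padTrunc Y t) + (padTrunc Y s - Yh)) ≤
      (rowSpan Yh ⊔ coordSubspace s t)ᗮ := by
    refine (rowSpan_add_le _ _).trans (sup_le ?_ (rowSpan_padTrunc_sub_le_orthogonal hsupp horth))
    exact (rowSpan_sub_padTrunc_le Y t).trans <| isOrtho_iff_le.1 <|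
      ((coordSubspace_isOrtho le_rfl).symm).mono_right (sup_coordSubspace_le hst hsupp)
  calc Y * (projMatrix (rowSpan Yh ⊔ coordSubspace s t) - projMatrix (rowSpan Yh'))
      = ((Y - padTrunc Y t) + (padTrunc Y s - Yh) + A) *
          (projMatrix (rowSpan Yh ⊔ coordSubspace s t) - projMatrix (rowSpan Yh')) := by
        congr 1
        rw [hAdef]
        abel
    _ = A - Yh' := by
        rw [mul_projMatrix_sub_projMatrix hE hA (hsvd.rowSpan_le hA), hsvd.mul_projMatrix_rowSpan]
    _ = (padTrunc Y t - Yh') - (padTrunc Y s - Yh) := by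
        rw [hAdef]
        abel

end Step

theorem IsMOSES.invariant {n M r b K : ℕ} {Y : Matrix (Fin n) (Fin M) ℝ}
    {Yhat : ℕ → Matrix (Fin n) (Fin M) ℝ} (h : IsMOSES r b K Y Yhat) {k : ℕ}
    (hk : k ≤ K) :
    rowSpan (Yhat k) ≤ coordSubspace 0 (k * b) ∧
      rowSpan (padTrunc Y (k * b) - Yhat k) ≤ (rowSpan (Yhat k))ᗮ := by
  induction k with
  | zero => simp [h.1, padTrunc_zero, rowSpan_zero]
  | succ k ih =>
    have hsvd := h.2 (k + 1) (Nat.le_add_left 1 k) hk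
    rw [Nat.add_sub_cancel] at hsvd
    obtain ⟨hsupp, horth⟩ := ih (Nat.le_of_succ_le hk)
    exact invariant_step (Nat.mul_le_mul_right b k.le_succ) hsupp horth hsvd

theorem stmt9_general (n M r b K : ℕ)
    (Y : Matrix (Fin n) (Fin M) ℝ)
    (Yhat : ℕ → Matrix (Fin n) (Fin M) ℝ) (hmoses : IsMOSES r b K Y Yhat) :
    ∀ k, 2 ≤ k → k ≤ K →
      padTrunc Y (k * b) - Yhat k =
        (padTrunc Y ((k - 1) * b) - Yhat (k - 1)) +
          Y * (projMatrix (rowSpan (Yhat (k - 1)) ⊔ coordSubspace ((k - 1) * b) (k * b)) -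
               projMatrix (rowSpan (Yhat k))) := by
  intro k hk hkK
  obtain ⟨hsupp, horth⟩ := hmoses.invariant (k := k - 1) (by omega)
  have hst : (k - 1) * b ≤ k * b := Nat.mul_le_mul_right b (Nat.sub_le k 1)
  rw [error_step hst hsupp horth (hmoses.2 k (by omega) hkK)]
  abel

/-- Recursive expression for the MOSES error: with the zero-padded MOSES
iterates `Ŷ_{k,r} ∈ ℝ^{n×Kb}`, row spaces `Q̂_{k,r} = span(Ŷ_{k,r}*)` and
`Q̃_k = Q̂_{k−1,r} ⊕ I_k`, for every `k ∈ [2:K]`: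
`Y_k − Ŷ_{k,r} = (Y_{k−1} − Ŷ_{k−1,r}) + Y_K(P_{Q̃_k} − P_{Q̂_{k,r}})`. -/
theorem stmt9 (n M r b K : ℕ) (hM : M = K * b)
    (Y : Matrix (Fin n) (Fin M) ℝ)
    (Yhat : ℕ → Matrix (Fin n) (Fin M) ℝ) (hmoses : IsMOSES r b K Y Yhat) :
    ∀ k, 2 ≤ k → k ≤ K →
      padTrunc Y (k * b) - Yhat k =
        (padTrunc Y ((k - 1) * b) - Yhat (k - 1)) +
          Y * (projMatrix (rowSpan (Yhat (k - 1)) ⊔ coordSubspace ((k - 1) * b) (k * b)) -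
               projMatrix (rowSpan (Yhat k))) :=
  stmt9_general n M r b K Y Yhat hmoses
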